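/- arXiv:1107.0414 — 3 statements merged into one kernel-verified Lean document; each statement's English description precedes it below -/
import Mathlib

section
/- In a connected weighted graph with volume V = ∑_{i,j} w_{ij}, if the distinct vertices u and v are separated by pairwise disjoint edge-cutsets E_1, ..., E_K (every path from u to v uses an edge of each E_k), then the commute time satisfies κ(u,v) ≥ V · ∑_{k=1}^{K} (∑_{e ∈ E_k} w_e)^{−1}. -/
/-!
Kill the walk at `v` and let `G = ∑ₜ Qᵗ` be the Green matrix of the killed walk `Q`; the series
converges because from every vertex the killed walk dies with positive probability within a
bounded number of steps. The identity `(G P) a c = G a c - δ a c + δ v c` and reversibility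
`w a b = w b a` say that `φ a = G u a / deg a` solves `Δφ = δᵤ - δᵥ`: it is the potential of a unit
current from `u` to `v`. The two hitting times are the row sums `∑ₐ deg a · φ a` of the potentials
for `(u, v)` and `(v, u)`, whose sum is harmonic and hence constant; this gives `κ = V · R` with
`R = φ u - φ v`, which is also half the energy `∑ w (dφ)²`. The whole unit current crosses each
cutset `Eₖ`, so Cauchy–Schwarz gives `1 ≤ (∑_{Eₖ} w) · (∑_{Eₖ} w (dφ)²)`, and as the cutsets are
disjoint the right-hand factors add up to at most half the energy, that is `R`.
-/

open Matrix BigOperators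

variable {V : Type*} [Fintype V] [DecidableEq V]

/-- Transition matrix `P = D⁻¹W` of the random walk on a weighted graph. -/
noncomputable def transition (w : Matrix V V ℝ) : Matrix V V ℝ :=
  Matrix.of fun a b => w a b / ∑ c, w a c

/-- The sub-stochastic matrix obtained by killing the walk at `v`. -/
noncomputable def killAt (P : Matrix V V ℝ) (v : V) : Matrix V V ℝ :=
  Matrix.of fun a b => if b = v then 0 else P a b

/-- Expected hitting time `h(u,v) = ∑_{t ≥ 0} P(T_v > t)` of `v` starting from `u`. -/
noncomputable def hitTime (P : Matrix V V ℝ) (u v : V) : ℝ :=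
  if u = v then 0 else ∑' t : ℕ, ((killAt P v ^ t) *ᵥ (fun _ => (1 : ℝ))) u

/-- Commute time `κ(u,v) = h(u,v) + h(v,u)` for the random walk on the weighted graph. -/
noncomputable def commuteTime (w : Matrix V V ℝ) (u v : V) : ℝ :=
  hitTime (transition w) u v + hitTime (transition w) v u

/-- The graph underlying a weight matrix: `a ~ b` iff `a ≠ b` and the weight is nonzero. -/
def wGraph (w : Matrix V V ℝ) : SimpleGraph V where
  Adj a b := a ≠ b ∧ (w a b ≠ 0 ∨ w b a ≠ 0)
  symm := ⟨fun _ _ h => ⟨h.1.symm, h.2.symm⟩⟩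
  loopless := ⟨fun _ h => h.1 rfl⟩

theorem summable_pow_div {r : ℝ} (hr0 : 0 ≤ r) (hr1 : r < 1) {m : ℕ} (hm : m ≠ 0) :
    Summable fun t : ℕ => r ^ (t / m) := by
  have : NeZero m := ⟨hm⟩
  rw [← (Nat.divModEquiv m).symm.summable_iff]
  have hblock : (fun t : ℕ => r ^ (t / m)) ∘ (Nat.divModEquiv m).symm =
      fun p : ℕ × Fin m => r ^ p.1 * 1 := by
    ext ⟨q, j⟩
    simp only [Function.comp_apply, Nat.divModEquiv_symm_apply, mul_one]
    rw [Nat.add_comm, Nat.add_mul_div_right _ _ (Nat.pos_of_ne_zero hm), Nat.div_eq_of_lt j.2,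
      zero_add]
  rw [hblock]
  exact (summable_geometric_of_lt_one hr0 hr1).mul_of_nonneg (g := fun _ : Fin m => 1)
    Summable.of_finite (fun _ => pow_nonneg hr0 _) fun _ => zero_le_one

namespace Matrix

theorem mulVec_mono_of_nonneg {m n : Type*} [Fintype n] {M : Matrix m n ℝ}
    (hM : ∀ i j, 0 ≤ M i j) : Monotone (M *ᵥ ·) :=
  fun _ _ hxy i => Finset.sum_le_sum fun j _ => mul_le_mul_of_nonneg_left (hxy j) (hM i j)

variable (V) in
def subStochastic : Submonoid (Matrix V V ℝ) where
  carrier := {M | (∀ a b, 0 ≤ M a b) ∧ M *ᵥ 1 ≤ 1}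
  mul_mem' {M N} hM hN :=
    ⟨fun a b => Finset.sum_nonneg fun c _ => mul_nonneg (hM.1 a c) (hN.1 c b), by
      rw [← mulVec_mulVec]
      exact (mulVec_mono_of_nonneg hM.1 hN.2).trans hM.2⟩
  one_mem' := ⟨fun a b => by rw [one_apply]; split_ifs <;> norm_num, by rw [one_mulVec]⟩

variable {M : Matrix V V ℝ}

theorem pow_mulVec_one_antitone (hM : M ∈ subStochastic V) :
    Antitone fun t : ℕ => M ^ t *ᵥ 1 :=
  antitone_nat_of_succ_le fun t => by
    rw [pow_succ, ← mulVec_mulVec]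
    exact mulVec_mono_of_nonneg (pow_mem hM t).1 hM.2

theorem pow_mul_mulVec_one_le (hM : M ∈ subStochastic V) {m : ℕ} {r : ℝ} (hr : 0 ≤ r)
    (hm : M ^ m *ᵥ 1 ≤ r • 1) (q : ℕ) : M ^ (m * q) *ᵥ 1 ≤ r ^ q • 1 := by
  induction q with
  | zero => simp
  | succ q ih =>
    calc M ^ (m * (q + 1)) *ᵥ 1 = M ^ (m * q) *ᵥ (M ^ m *ᵥ 1) := by
          rw [mulVec_mulVec, mul_add, mul_one, pow_add]
      _ ≤ M ^ (m * q) *ᵥ (r • 1) := mulVec_mono_of_nonneg (pow_mem hM _).1 hm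
      _ = r • (M ^ (m * q) *ᵥ 1) := mulVec_smul _ _ _
      _ ≤ r • (r ^ q • 1) := smul_le_smul_of_nonneg_left ih hr
      _ = r ^ (q + 1) • 1 := by rw [smul_smul, pow_succ']

theorem summable_pow_of_forall_exists_pow_mulVec_one_lt (hM : M ∈ subStochastic V)
    (h : ∀ a, ∃ t, (M ^ t *ᵥ 1) a < 1) : Summable fun t : ℕ => M ^ t := by
  choose τ hτ using h
  set m := Finset.univ.sup τ
  have hm : ∀ a, (M ^ m *ᵥ 1) a < 1 := fun a =>
    (pow_mulVec_one_antitone hM (Finset.le_sup (Finset.mem_univ a)) a).trans_lt (hτ a)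
  refine Pi.summable.2 fun a => Pi.summable.2 fun b => ?_
  obtain ⟨a₀, -, ha₀⟩ :=
    Finset.univ.exists_max_image (fun x => (M ^ m *ᵥ 1) x) ⟨a, Finset.mem_univ a⟩
  set r := (M ^ m *ᵥ 1) a₀
  have hr0 : 0 ≤ r := Finset.sum_nonneg fun c _ => mul_nonneg ((pow_mem hM m).1 a₀ c) zero_le_one
  have hm0 : m ≠ 0 := fun h0 => by simpa [h0] using hm a
  refine Summable.of_nonneg_of_le (fun t => (pow_mem hM t).1 a b) (fun t => ?_)
    (summable_pow_div hr0 (hm a₀) hm0)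
  calc (M ^ t) a b ≤ (M ^ t *ᵥ 1) a := by
        simpa [mulVec, dotProduct] using
          Finset.single_le_sum (fun c _ => (pow_mem hM t).1 a c) (Finset.mem_univ b)
    _ ≤ (M ^ (m * (t / m)) *ᵥ 1) a := pow_mulVec_one_antitone hM (Nat.mul_div_le t m) a
    _ ≤ (r ^ (t / m) • (1 : V → ℝ)) a :=
        pow_mul_mulVec_one_le hM hr0 (fun x => by simpa using ha₀ x (Finset.mem_univ x)) _ a
    _ = r ^ (t / m) := by simp

noncomputable def green (M : Matrix V V ℝ) : Matrix V V ℝ := ∑' t : ℕ, M ^ t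

theorem green_eq_one_add_green_mul (h : Summable fun t : ℕ => M ^ t) :
    green M = 1 + green M * M := by
  have h0 := h.tsum_eq_zero_add
  simp only [pow_zero, pow_succ, h.tsum_mul_right] at h0
  exact h0

end Matrix

section KilledChain

variable {P : Matrix V V ℝ}

theorem killAt_mulVec_one (hP : P ∈ rowStochastic ℝ V) (v : V) :
    killAt P v *ᵥ 1 = 1 - fun b => P b v := by
  ext b
  have hkill : ∀ c, killAt P v b c = P b c - if c = v then P b v else 0 := by
    intro c
    by_cases hc : c = v <;> simp [killAt, hc]
  simp only [mulVec, dotProduct, Pi.one_apply, mul_one, hkill, Finset.sum_sub_distrib,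
    Finset.sum_ite_eq', Finset.mem_univ, if_true, sum_row_of_mem_rowStochastic hP b,
    Pi.sub_apply]

theorem killAt_mem_subStochastic (hP : P ∈ rowStochastic ℝ V) (v : V) :
    killAt P v ∈ subStochastic V := by
  refine ⟨fun a b => ?_, ?_⟩
  · by_cases hb : b = v
    · simp [killAt, hb]
    · simpa [killAt, hb] using hP.1 a b
  · rw [killAt_mulVec_one hP]
    exact fun b => sub_le_self _ (hP.1 b v)

theorem green_killAt_mul_apply {v : V} (hP : P ∈ rowStochastic ℝ V)
    (hQ : Summable fun t : ℕ => killAt P v ^ t) (a c : V) :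
    (green (killAt P v) * P) a c =
      green (killAt P v) a c - (1 : Matrix V V ℝ) a c + if c = v then 1 else 0 := by
  have hG : green (killAt P v) * killAt P v = green (killAt P v) - 1 :=
    eq_sub_of_add_eq' (green_eq_one_add_green_mul hQ).symm
  by_cases hc : c = v
  · subst hc
    have hcol : green (killAt P c) *ᵥ (fun b => P b c) = 1 := by
      rw [← sub_sub_cancel 1 (fun b => P b c), ← killAt_mulVec_one hP, mulVec_sub,
        mulVec_mulVec, hG, sub_mulVec, sub_sub_cancel, one_mulVec]
    have hzero : (green (killAt P c) * killAt P c) a c = 0 :=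
      Finset.sum_eq_zero fun b _ => by simp [killAt]
    rw [hG, Matrix.sub_apply] at hzero
    rw [mul_apply, if_pos rfl, hzero, zero_add]
    exact congr_fun hcol a
  · have hcol : (green (killAt P v) * P) a c = (green (killAt P v) * killAt P v) a c :=
      Finset.sum_congr rfl fun b _ => by simp [killAt, hc]
    rw [hcol, hG, Matrix.sub_apply, if_neg hc, add_zero]

theorem green_killAt_apply_of_ne {u v : V} (hQ : Summable fun t : ℕ => killAt P v ^ t)
    (huv : u ≠ v) : green (killAt P v) u v = 0 := by
  rw [green_eq_one_add_green_mul hQ, Matrix.add_apply, one_apply_ne huv, mul_apply]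
  simp [killAt]

theorem hitTime_eq_sum_green {u v : V} (hQ : Summable fun t : ℕ => killAt P v ^ t)
    (huv : u ≠ v) : hitTime P u v = ∑ b, green (killAt P v) u b := by
  have hrow : Summable fun t : ℕ => (killAt P v ^ t) u := Pi.summable.1 hQ u
  rw [hitTime, if_neg huv]
  simp only [mulVec, dotProduct, mul_one]
  rw [Summable.tsum_finsetSum fun b _ => Pi.summable.1 hrow b]
  exact Finset.sum_congr rfl fun b _ =>
    ((congr_fun (tsum_apply hQ) b).trans (tsum_apply hrow)).symm

end KilledChain

section RandomWalk

variable {w : Matrix V V ℝ}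

omit [Fintype V] [DecidableEq V] in
theorem wGraph_adj_iff (hsym : ∀ a b, w a b = w b a) {a b : V} :
    (wGraph w).Adj a b ↔ a ≠ b ∧ w a b ≠ 0 := by
  simp [wGraph, hsym b a]

theorem transition_mem_rowStochastic (hnn : ∀ a b, 0 ≤ w a b) (hdeg : ∀ a, 0 < ∑ b, w a b) :
    transition w ∈ rowStochastic ℝ V :=
  mem_rowStochastic_iff_sum.2 ⟨fun a b => div_nonneg (hnn a b) (hdeg a).le, fun a => by
    simp only [transition, of_apply, ← Finset.sum_div, div_self (hdeg a).ne']⟩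

omit [DecidableEq V] in
theorem transition_pos_of_adj (hsym : ∀ a b, w a b = w b a) (hnn : ∀ a b, 0 ≤ w a b)
    (hdeg : ∀ a, 0 < ∑ b, w a b) {a b : V} (h : (wGraph w).Adj a b) : 0 < transition w a b :=
  div_pos (lt_of_le_of_ne (hnn a b) ((wGraph_adj_iff hsym).1 h).2.symm) (hdeg a)

theorem exists_killAt_transition_pow_mulVec_one_lt (hsym : ∀ a b, w a b = w b a)
    (hnn : ∀ a b, 0 ≤ w a b) (hdeg : ∀ a, 0 < ∑ b, w a b) (hconn : (wGraph w).Connected)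
    {u v : V} (huv : u ≠ v) (a : V) : ∃ t, (killAt (transition w) v ^ t *ᵥ 1) a < 1 := by
  have hP := transition_mem_rowStochastic hnn hdeg
  have hQ := killAt_mem_subStochastic hP v
  have hstep : ∀ {a b : V}, (wGraph w).Adj a b →
      b = v ∨ (∃ t, (killAt (transition w) v ^ t *ᵥ 1) b < 1) →
      ∃ t, (killAt (transition w) v ^ t *ᵥ 1) a < 1 := by
    intro a b hab hb
    have hPab := transition_pos_of_adj hsym hnn hdeg hab
    rcases eq_or_ne b v with rfl | hbv
    · refine ⟨1, ?_⟩
      rw [pow_one, killAt_mulVec_one hP]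
      simpa using hPab
    obtain ⟨t, ht⟩ := hb.resolve_left hbv
    refine ⟨t + 1, ?_⟩
    rw [pow_succ', ← mulVec_mulVec]
    calc (killAt (transition w) v *ᵥ (killAt (transition w) v ^ t *ᵥ 1)) a
        < (killAt (transition w) v *ᵥ 1) a :=
          Finset.sum_lt_sum
            (fun c _ => mul_le_mul_of_nonneg_left ((pow_mem hQ t).2 c) (hQ.1 a c))
            ⟨b, Finset.mem_univ b, mul_lt_mul_of_pos_left ht (by simpa [killAt, hbv] using hPab)⟩
      _ ≤ 1 := hQ.2 a
  have hreach : ∀ {a b : V}, (wGraph w).Walk a b → b = v →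
      a = v ∨ ∃ t, (killAt (transition w) v ^ t *ᵥ 1) a < 1 := by
    intro a b p hb
    induction p with
    | nil => exact Or.inl hb
    | cons hab _ ih => exact Or.inr (hstep hab (ih hb))
  rcases hreach (hconn.preconnected a v).some rfl with rfl | h
  -- started at `v`, the walk is killed only on returning to `v`: first step to a neighbour
  · obtain ⟨p⟩ := hconn.preconnected a u
    exact hstep (p.adj_snd (SimpleGraph.Walk.not_nil_of_ne huv.symm))
      (hreach (hconn.preconnected p.snd a).some rfl)
  · exact h

theorem summable_killAt_transition_pow (hsym : ∀ a b, w a b = w b a) (hnn : ∀ a b, 0 ≤ w a b)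
    (hdeg : ∀ a, 0 < ∑ b, w a b) (hconn : (wGraph w).Connected) {u v : V} (huv : u ≠ v) :
    Summable fun t : ℕ => killAt (transition w) v ^ t :=
  summable_pow_of_forall_exists_pow_mulVec_one_lt
    (killAt_mem_subStochastic (transition_mem_rowStochastic hnn hdeg) v)
    (exists_killAt_transition_pow_mulVec_one_lt hsym hnn hdeg hconn huv)

end RandomWalk

omit [DecidableEq V] in
theorem SimpleGraph.exists_separating_finset {G : SimpleGraph V} {u v : V} {E : Finset (V × V)}
    (hcut : ∀ q : G.Walk u v, ∃ d ∈ q.darts, d.toProd ∈ E ∨ d.toProd.swap ∈ E) :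
    ∃ S : Finset V, u ∈ S ∧ v ∉ S ∧
      ∀ a ∈ S, ∀ b ∉ S, G.Adj a b → (a, b) ∈ E ∨ (b, a) ∈ E := by
  classical
  set H := G.deleteEdges ((fun p : V × V => s(p.1, p.2)) '' (E : Set (V × V)))
  have hH : ∀ {a b : V}, H.Adj a b ↔ G.Adj a b ∧ ¬((a, b) ∈ E ∨ (b, a) ∈ E) := by
    intro a b
    simp only [H, deleteEdges_adj, Set.mem_image, Finset.mem_coe, Sym2.eq_iff, not_exists,
      not_and, not_or]
    grind
  refine ⟨Finset.univ.filter (H.Reachable u), by simp, ?_, fun a ha b hb hab => ?_⟩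
  · simp only [Finset.mem_filter, Finset.mem_univ, true_and]
    rintro ⟨q⟩
    obtain ⟨d, hd, hdE⟩ := hcut (q.mapLe (G.deleteEdges_le _))
    rw [Walk.mapLe, Walk.darts_map, List.mem_map] at hd
    obtain ⟨d', -, rfl⟩ := hd
    exact (hH.1 d'.adj).2 hdE
  · by_contra hnot
    simp only [Finset.mem_filter, Finset.mem_univ, true_and] at ha hb
    exact hb (ha.trans (hH.2 ⟨hab, hnot⟩).reachable)

theorem sum_product_compl_le_sum {S : Finset V} {E : Finset (V × V)} {F : V × V → ℝ}
    (hF : 0 ≤ F) (hswap : ∀ p, F p.swap = F p)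
    (hE : ∀ a ∈ S, ∀ b ∉ S, F (a, b) ≠ 0 → (a, b) ∈ E ∨ (b, a) ∈ E) :
    ∑ p ∈ S ×ˢ Sᶜ, F p ≤ ∑ p ∈ E, F p := by
  set T := (S ×ˢ Sᶜ).filter (F · ≠ 0)
  have hT : ∀ p ∈ T, p.1 ∈ S ∧ p.2 ∉ S ∧ (p ∈ E ∨ p.swap ∈ E) := fun p hp => by
    simp only [T, Finset.mem_filter, Finset.mem_product, Finset.mem_compl] at hp
    exact ⟨hp.1.1, hp.1.2, hE p.1 hp.1.1 p.2 hp.1.2 hp.2⟩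
  let g : V × V → V × V := fun p => if p ∈ E then p else p.swap
  have hgE : ∀ p ∈ T, g p ∈ E := fun p hp => by
    by_cases h : p ∈ E <;> simp [g, h, ((hT p hp).2.2).resolve_left]
  -- the orientation of a crossing pair is recovered from which of its ends lies in `S`
  have hginj : Set.InjOn g T := by
    have hleft : ∀ p ∈ T, (if (g p).1 ∈ S then g p else (g p).swap) = p := fun p hp => by
      by_cases h : p ∈ E <;> simp [g, h, (hT p hp).1, (hT p hp).2.1]
    exact fun p hp q hq hpq => by rw [← hleft p hp, ← hleft q hq, hpq]
  calc ∑ p ∈ S ×ˢ Sᶜ, F p = ∑ p ∈ T, F (g p) := by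
        rw [← Finset.sum_filter_ne_zero]
        exact Finset.sum_congr rfl fun p _ => by by_cases h : p ∈ E <;> simp [g, h, hswap]
    _ = ∑ p ∈ T.image g, F p := (Finset.sum_image hginj).symm
    _ ≤ ∑ p ∈ E, F p := Finset.sum_le_sum_of_subset_of_nonneg
        (Finset.image_subset_iff.2 hgE) fun p _ _ => hF p

theorem two_mul_sum_sum_le_sum_of_disjoint {ι : Type*} [Fintype ι] (E : ι → Finset (V × V))
    {F : V × V → ℝ} (hF : 0 ≤ F) (hswap : ∀ p, F p.swap = F p)
    (honce : ∀ k, ∀ p ∈ E k, p.swap ∉ E k)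
    (hdisj : ∀ k l, k ≠ l → ∀ p ∈ E k, p ∉ E l ∧ p.swap ∉ E l) :
    2 * ∑ k, ∑ p ∈ E k, F p ≤ ∑ p, F p := by
  set D : ι → Finset (V × V) := fun k => E k ∪ (E k).map (Equiv.prodComm V V).toEmbedding
  have hmemD : ∀ {k p}, p ∈ D k ↔ p ∈ E k ∨ p.swap ∈ E k := by
    simp [D, Finset.mem_map_equiv]
  have hD : ∀ k, ∑ p ∈ D k, F p = 2 * ∑ p ∈ E k, F p := fun k => by
    rw [Finset.sum_union (Finset.disjoint_left.2 fun p hp hp' => honce k p hp (by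
      simpa [Finset.mem_map_equiv] using hp')), Finset.sum_map, two_mul]
    simp [hswap]
  have hpair : (↑(Finset.univ : Finset ι) : Set ι).PairwiseDisjoint D := by
    intro k _ l _ hkl
    refine Finset.disjoint_left.2 fun p hk hl => ?_
    rcases hmemD.1 hk with hk | hk <;> rcases hmemD.1 hl with hl | hl
    · exact (hdisj k l hkl p hk).1 hl
    · exact (hdisj k l hkl p hk).2 hl
    · exact (hdisj k l hkl p.swap hk).2 (by simpa using hl)
    · exact (hdisj k l hkl p.swap hk).1 hl
  calc 2 * ∑ k, ∑ p ∈ E k, F p = ∑ k, ∑ p ∈ D k, F p := by simp [hD, Finset.mul_sum]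
    _ = ∑ p ∈ Finset.univ.biUnion D, F p := (Finset.sum_biUnion hpair).symm
    _ ≤ ∑ p, F p := Finset.sum_le_univ_sum_of_nonneg hF

section Laplacian

variable {w : Matrix V V ℝ}

def weightedLaplacian (w : Matrix V V ℝ) (f : V → ℝ) (a : V) : ℝ :=
  ∑ b, w a b * (f a - f b)

omit [DecidableEq V] in
theorem weightedLaplacian_add (f g : V → ℝ) :
    weightedLaplacian w (f + g) = weightedLaplacian w f + weightedLaplacian w g := by
  funext a
  simp only [weightedLaplacian, Pi.add_apply, ← Finset.sum_add_distrib]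
  exact Finset.sum_congr rfl fun b _ => by ring

omit [DecidableEq V] in
theorem sum_mul_sq_sub_eq_two_mul_sum_mul_weightedLaplacian (hsym : ∀ a b, w a b = w b a)
    (f : V → ℝ) :
    ∑ a, ∑ b, w a b * (f a - f b) ^ 2 = 2 * ∑ a, f a * weightedLaplacian w f a := by
  have hswap : ∑ a, ∑ b, w a b * f b * (f a - f b) = -∑ a, ∑ b, w a b * f a * (f a - f b) := by
    rw [Finset.sum_comm]
    simp only [← Finset.sum_neg_distrib]
    exact Finset.sum_congr rfl fun b _ => Finset.sum_congr rfl fun a _ => by rw [hsym a b]; ring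
  calc ∑ a, ∑ b, w a b * (f a - f b) ^ 2
      = ∑ a, ∑ b, w a b * f a * (f a - f b) - ∑ a, ∑ b, w a b * f b * (f a - f b) := by
        simp only [← Finset.sum_sub_distrib]
        exact Finset.sum_congr rfl fun a _ => Finset.sum_congr rfl fun b _ => by ring
    _ = 2 * ∑ a, f a * weightedLaplacian w f a := by
        rw [hswap, sub_neg_eq_add, ← two_mul]
        congr 1
        exact Finset.sum_congr rfl fun a _ => by
          rw [weightedLaplacian, Finset.mul_sum]
          exact Finset.sum_congr rfl fun b _ => by ring

theorem sum_weightedLaplacian_eq_sum_compl (hsym : ∀ a b, w a b = w b a) (S : Finset V)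
    (f : V → ℝ) :
    ∑ a ∈ S, weightedLaplacian w f a = ∑ a ∈ S, ∑ b ∈ Sᶜ, w a b * (f a - f b) := by
  have hinner : ∑ a ∈ S, ∑ b ∈ S, w a b * (f a - f b) = 0 := by
    have h : ∑ a ∈ S, ∑ b ∈ S, w a b * (f a - f b) = -∑ a ∈ S, ∑ b ∈ S, w a b * (f a - f b) := by
      conv_lhs => rw [Finset.sum_comm]
      simp only [← Finset.sum_neg_distrib]
      exact Finset.sum_congr rfl fun b _ => Finset.sum_congr rfl fun a _ => by rw [hsym a b]; ring
    linarith
  simp only [weightedLaplacian, ← Finset.sum_add_sum_compl S, Finset.sum_add_distrib, hinner,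
    zero_add]

omit [DecidableEq V] in
theorem eq_of_weightedLaplacian_eq_zero (hsym : ∀ a b, w a b = w b a) (hnn : ∀ a b, 0 ≤ w a b)
    (hconn : (wGraph w).Connected) {f : V → ℝ} (hf : weightedLaplacian w f = 0) (a b : V) :
    f a = f b := by
  have hterm_nonneg : ∀ a b, 0 ≤ w a b * (f a - f b) ^ 2 := fun a b =>
    mul_nonneg (hnn a b) (sq_nonneg _)
  have henergy : ∑ a, ∑ b, w a b * (f a - f b) ^ 2 = 0 := by
    simp [sum_mul_sq_sub_eq_two_mul_sum_mul_weightedLaplacian hsym, hf]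
  have hterm : ∀ a b, w a b * (f a - f b) ^ 2 = 0 := fun a b =>
    (Finset.sum_eq_zero_iff_of_nonneg fun b _ => hterm_nonneg a b).1
      ((Finset.sum_eq_zero_iff_of_nonneg fun a _ => Finset.sum_nonneg fun b _ =>
        hterm_nonneg a b).1 henergy a (Finset.mem_univ a)) b (Finset.mem_univ b)
  have hadj : ∀ {a b}, (wGraph w).Adj a b → f a = f b := fun {a b} h =>
    sub_eq_zero.1 (pow_eq_zero_iff two_ne_zero |>.1
      ((mul_eq_zero.1 (hterm a b)).resolve_left ((wGraph_adj_iff hsym).1 h).2))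
  obtain ⟨p⟩ := hconn.preconnected a b
  induction p with
  | nil => rfl
  | cons h _ ih => exact (hadj h).trans ih

theorem sum_mul_sq_sub_eq_of_weightedLaplacian_eq (hsym : ∀ a b, w a b = w b a) {f : V → ℝ}
    {u v : V} (hf : weightedLaplacian w f = Pi.single u 1 - Pi.single v 1) :
    ∑ a, ∑ b, w a b * (f a - f b) ^ 2 = 2 * (f u - f v) := by
  rw [sum_mul_sq_sub_eq_two_mul_sum_mul_weightedLaplacian hsym, hf]
  simp [mul_sub, Finset.sum_sub_distrib, Pi.single_apply]

theorem inv_sum_le_sum_mul_sq_sub_of_separates (hsym : ∀ a b, w a b = w b a)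
    (hnn : ∀ a b, 0 ≤ w a b) {f : V → ℝ} {u v : V}
    (hf : weightedLaplacian w f = Pi.single u 1 - Pi.single v 1) {S : Finset V} (huS : u ∈ S)
    (hvS : v ∉ S) {E : Finset (V × V)}
    (hE : ∀ a ∈ S, ∀ b ∉ S, w a b ≠ 0 → (a, b) ∈ E ∨ (b, a) ∈ E) :
    (∑ p ∈ E, w p.1 p.2)⁻¹ ≤ ∑ p ∈ E, w p.1 p.2 * (f p.1 - f p.2) ^ 2 := by
  have hflow : 1 ≤ ∑ p ∈ E, |w p.1 p.2 * (f p.1 - f p.2)| :=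
    calc (1 : ℝ) = ∑ a ∈ S, weightedLaplacian w f a := by
          simp [hf, Pi.single_apply, Finset.sum_sub_distrib, huS, hvS]
      _ = ∑ p ∈ S ×ˢ Sᶜ, w p.1 p.2 * (f p.1 - f p.2) := by
          rw [sum_weightedLaplacian_eq_sum_compl hsym, Finset.sum_product]
      _ ≤ ∑ p ∈ S ×ˢ Sᶜ, |w p.1 p.2 * (f p.1 - f p.2)| :=
          Finset.sum_le_sum fun p _ => le_abs_self _
      _ ≤ ∑ p ∈ E, |w p.1 p.2 * (f p.1 - f p.2)| :=
          sum_product_compl_le_sum (fun p => abs_nonneg _)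
            (fun p => by rw [Prod.fst_swap, Prod.snd_swap, hsym, ← neg_sub, mul_neg, abs_neg])
            fun a ha b hb h => hE a ha b hb (left_ne_zero_of_mul (abs_ne_zero.1 h))
  have hCS : (∑ p ∈ E, |w p.1 p.2 * (f p.1 - f p.2)|) ^ 2 ≤
      (∑ p ∈ E, w p.1 p.2) * ∑ p ∈ E, w p.1 p.2 * (f p.1 - f p.2) ^ 2 :=
    Finset.sum_sq_le_sum_mul_sum_of_sq_le_mul E (fun p _ => hnn _ _)
      (fun p _ => mul_nonneg (hnn _ _) (sq_nonneg _)) fun p _ => le_of_eq (by rw [sq_abs]; ring)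
  have hprod := (one_le_pow₀ hflow (n := 2)).trans hCS
  have hpos : 0 < ∑ p ∈ E, w p.1 p.2 :=
    (Finset.sum_nonneg fun p _ => hnn _ _).lt_of_ne fun h => by
      rw [← h, zero_mul] at hprod
      linarith
  exact (inv_le_iff_one_le_mul₀' hpos).2 hprod

end Laplacian

section Resistance

variable {w : Matrix V V ℝ}

omit [DecidableEq V] in
theorem weightedLaplacian_div_sum (hsym : ∀ a b, w a b = w b a) (μ : V → ℝ) {a : V}
    (ha : ∑ c, w a c ≠ 0) :
    weightedLaplacian w (fun b => μ b / ∑ c, w b c) a = μ a - ∑ b, μ b * transition w b a := by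
  simp only [weightedLaplacian, mul_sub, Finset.sum_sub_distrib, ← Finset.sum_mul,
    mul_div_cancel₀ _ ha]
  exact congrArg _ (Finset.sum_congr rfl fun b _ => by rw [transition, of_apply, hsym]; ring)

/-- Expected number of visits to `a` before hitting `v`, starting from `u`, per unit of degree.
By reversibility this is the potential of a unit current from `u` to `v`. -/
noncomputable def voltage (w : Matrix V V ℝ) (u v a : V) : ℝ :=
  green (killAt (transition w) v) u a / ∑ c, w a c

/-- Since `voltage w u v v = 0`, this is the voltage drop between `u` and `v`. -/
noncomputable def effectiveResistance (w : Matrix V V ℝ) (u v : V) : ℝ := voltage w u v u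

variable (hsym : ∀ a b, w a b = w b a) (hnn : ∀ a b, 0 ≤ w a b) (hdeg : ∀ a, 0 < ∑ b, w a b)
  (hconn : (wGraph w).Connected) {u v : V}

include hsym hnn hdeg hconn

theorem voltage_apply_right (huv : u ≠ v) : voltage w u v v = 0 := by
  rw [voltage, green_killAt_apply_of_ne (summable_killAt_transition_pow hsym hnn hdeg hconn huv)
    huv, zero_div]

theorem weightedLaplacian_voltage (huv : u ≠ v) :
    weightedLaplacian w (voltage w u v) = Pi.single u 1 - Pi.single v 1 := by
  funext a
  rw [show voltage w u v = fun b => green (killAt (transition w) v) u b / ∑ c, w b c from rfl,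
    weightedLaplacian_div_sum hsym _ (hdeg a).ne', ← mul_apply,
    green_killAt_mul_apply (transition_mem_rowStochastic hnn hdeg)
      (summable_killAt_transition_pow hsym hnn hdeg hconn huv)]
  rcases eq_or_ne a u with rfl | hau
  · simp [huv, one_apply]
  · rcases eq_or_ne a v with rfl | hav
    · simp [hau, huv]
    · simp [hau, hav, one_apply_ne hau.symm]

theorem commuteTime_eq_mul_effectiveResistance (huv : u ≠ v) :
    commuteTime w u v = (∑ a, ∑ b, w a b) * effectiveResistance w u v := by
  have hconst : ∀ a, voltage w u v a + voltage w v u a = effectiveResistance w u v := by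
    have hharm : weightedLaplacian w (voltage w u v + voltage w v u) = 0 := by
      rw [weightedLaplacian_add, weightedLaplacian_voltage hsym hnn hdeg hconn huv,
        weightedLaplacian_voltage hsym hnn hdeg hconn huv.symm]
      abel
    intro a
    rw [← Pi.add_apply (voltage w u v), eq_of_weightedLaplacian_eq_zero hsym hnn hconn hharm a u,
      Pi.add_apply, voltage_apply_right hsym hnn hdeg hconn huv.symm, add_zero, effectiveResistance]
  have hgreen : ∀ x y a, green (killAt (transition w) y) x a = (∑ b, w a b) * voltage w x y a :=
    fun x y a => (mul_div_cancel₀ _ (hdeg a).ne').symm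
  rw [commuteTime,
    hitTime_eq_sum_green (summable_killAt_transition_pow hsym hnn hdeg hconn huv) huv,
    hitTime_eq_sum_green (summable_killAt_transition_pow hsym hnn hdeg hconn huv.symm) huv.symm,
    ← Finset.sum_add_distrib, Finset.sum_mul]
  exact Finset.sum_congr rfl fun a _ => by rw [hgreen, hgreen, ← mul_add, hconst]

theorem sum_inv_le_effectiveResistance (huv : u ≠ v) {ι : Type*} [Fintype ι]
    (E : ι → Finset (V × V)) (honce : ∀ k, ∀ p ∈ E k, p.swap ∉ E k)
    (hdisj : ∀ k l, k ≠ l → ∀ p ∈ E k, p ∉ E l ∧ p.swap ∉ E l)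
    (hcut : ∀ k, ∀ q : (wGraph w).Walk u v, ∃ d ∈ q.darts, d.toProd ∈ E k ∨ d.toProd.swap ∈ E k) :
    ∑ k, (∑ p ∈ E k, w p.1 p.2)⁻¹ ≤ effectiveResistance w u v := by
  set φ := voltage w u v
  have hφ := weightedLaplacian_voltage hsym hnn hdeg hconn huv
  set F : V × V → ℝ := fun p => w p.1 p.2 * (φ p.1 - φ p.2) ^ 2
  have hcutset : ∀ k, (∑ p ∈ E k, w p.1 p.2)⁻¹ ≤ ∑ p ∈ E k, F p := fun k => by
    obtain ⟨S, huS, hvS, hS⟩ := SimpleGraph.exists_separating_finset (hcut k)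
    exact inv_sum_le_sum_mul_sq_sub_of_separates hsym hnn hφ huS hvS fun a ha b hb hab =>
      hS a ha b hb ((wGraph_adj_iff hsym).2 ⟨ne_of_mem_of_not_mem ha hb, hab⟩)
  have hdisjoint := two_mul_sum_sum_le_sum_of_disjoint E (F := F)
    (fun p => mul_nonneg (hnn _ _) (sq_nonneg _))
    (fun p => by simp only [F, Prod.fst_swap, Prod.snd_swap, hsym p.2 p.1]; ring)
    honce hdisj
  have henergy : ∑ p, F p = 2 * effectiveResistance w u v := by
    rw [Fintype.sum_prod_type, sum_mul_sq_sub_eq_of_weightedLaplacian_eq hsym hφ,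
      voltage_apply_right hsym hnn hdeg hconn huv, sub_zero, effectiveResistance]
  calc ∑ k, (∑ p ∈ E k, w p.1 p.2)⁻¹ ≤ ∑ k, ∑ p ∈ E k, F p :=
        Finset.sum_le_sum fun k _ => hcutset k
    _ ≤ effectiveResistance w u v := by linarith

end Resistance

theorem nash_williams_commute_time_general (w : Matrix V V ℝ)
    (hsym : ∀ a b, w a b = w b a) (hnn : ∀ a b, 0 ≤ w a b)
    (hdeg : ∀ a, 0 < ∑ b, w a b) (hconn : (wGraph w).Connected)
    (u v : V) (huv : u ≠ v) (K : ℕ) (E : Fin K → Finset (V × V))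
    (honce : ∀ k, ∀ p ∈ E k, p.swap ∉ E k)
    (hdisj : ∀ k l, k ≠ l → ∀ p ∈ E k, p ∉ E l ∧ p.swap ∉ E l)
    (hcut : ∀ k, ∀ q : (wGraph w).Walk u v,
      ∃ d ∈ q.darts, d.toProd ∈ E k ∨ d.toProd.swap ∈ E k) :
    (∑ a, ∑ b, w a b) * ∑ k, (∑ p ∈ E k, w p.1 p.2)⁻¹ ≤ commuteTime w u v := by
  rw [commuteTime_eq_mul_effectiveResistance hsym hnn hdeg hconn huv]
  exact mul_le_mul_of_nonneg_left
    (sum_inv_le_effectiveResistance hsym hnn hdeg hconn huv E honce hdisj hcut)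
    (Finset.sum_nonneg fun a _ => Finset.sum_nonneg fun b _ => hnn a b)

/-- **Nash–Williams inequality.**  In a connected weighted graph with volume
`V = ∑_{i,j} w_{ij}`, if the distinct vertices `u` and `v` are separated by pairwise
disjoint edge-cutsets `E_1, …, E_K` (every walk from `u` to `v` uses an edge of each
`E_k`), then the commute time satisfies
`κ(u,v) ≥ V · ∑_k (∑_{e ∈ E_k} w_e)⁻¹`. -/
theorem nash_williams_commute_time (w : Matrix V V ℝ)
    (hsym : ∀ a b, w a b = w b a) (hnn : ∀ a b, 0 ≤ w a b)
    (hdeg : ∀ a, 0 < ∑ b, w a b) (hconn : (wGraph w).Connected)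
    (u v : V) (huv : u ≠ v) (K : ℕ) (E : Fin K → Finset (V × V))
    (hedge : ∀ k, ∀ p ∈ E k, p.1 ≠ p.2 ∧ 0 < w p.1 p.2)
    (honce : ∀ k, ∀ p ∈ E k, p.swap ∉ E k)
    (hdisj : ∀ k l, k ≠ l → ∀ p ∈ E k, p ∉ E l ∧ p.swap ∉ E l)
    (hcut : ∀ k, ∀ q : (wGraph w).Walk u v,
      ∃ d ∈ q.darts, d.toProd ∈ E k ∨ d.toProd.swap ∈ E k) :
    (∑ a, ∑ b, w a b) * ∑ k, (∑ p ∈ E k, w p.1 p.2)⁻¹ ≤ commuteTime w u v :=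
  nash_williams_commute_time_general w hsym hnn hdeg hconn u v huv K E honce hdisj hcut
end

section
/- In the slow graph S(N,L) with all edge weights equal to w_S > 0, the commute time between vertices x_{m_0} and x_{n_0} with m_0 < n_0 satisfies κ(x_{m_0}, x_{n_0}) ≥ (2[N(2L+1) − L(L+1)]/(L(L+1))) · (n_0 − m_0)/L. -/
open Matrix BigOperators

variable {V : Type*} [Fintype V] [DecidableEq V]

/-- The weight matrix of the slow graph `S(N,L)`: `w_{nm} = w_S` if `|n−m| ≤ L`
(including self-loops) and `0` otherwise. -/
noncomputable def slowWeight (N L : ℕ) (wS : ℝ) : Matrix (Fin N) (Fin N) ℝ :=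
  Matrix.of fun n m => if ((n : ℤ) - (m : ℤ)).natAbs ≤ L then wS else 0

/-!
Dirichlet principle for commute times, in the form that underlies Nash–Williams. With
`h_v = h(·, v)`, the function `β = h_v - h_u` has weighted Laplacian `vol · (δ_u - δ_v)`, so its
Dirichlet form `E` satisfies `E(β, φ) = 2 vol (φ u - φ v)` and `E(β, β) = 2 vol κ(u, v)`; the
Cauchy–Schwarz inequality for `E` gives `2 vol (φ u - φ v)² ≤ E(φ, φ) κ(u, v)` for every `φ`.

On `S(N, L)` take `φ` rising linearly with slope `1 / L` from `x_{m₀}` to `x_{n₀}` and constant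
outside. Its increments across an edge lie in `[0, 1]`, so their squares are at most the increments
themselves, and the edges of length `t` carry a total increment of at most `t` times the total rise
`(n₀ - m₀) / L`; hence `E(φ, φ) ≤ w_S (n₀ - m₀) (L + 1)`, while `vol = [N(2L + 1) - L(L + 1)] w_S`
exactly. Hitting times are finite because the walk killed at `v` dies within `N` steps with
probability at least `N ^ (-N)`.
-/

open Finset

section NonnegMulVec

variable {V : Type*} [Fintype V] {Q : Matrix V V ℝ}

theorem mulVec_le_mulVec_of_nonneg (hQ : ∀ x y, 0 ≤ Q x y) {f g : V → ℝ} (hfg : ∀ y, f y ≤ g y)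
    (x : V) : (Q *ᵥ f) x ≤ (Q *ᵥ g) x :=
  sum_le_sum fun y _ => mul_le_mul_of_nonneg_left (hfg y) (hQ x y)

theorem mulVec_le_sum_of_le_one (hQ : ∀ x y, 0 ≤ Q x y) {f : V → ℝ} (hf : ∀ y, f y ≤ 1)
    (x : V) : (Q *ᵥ f) x ≤ ∑ y, Q x y := by
  simpa [mulVec, dotProduct] using mulVec_le_mulVec_of_nonneg hQ hf x

theorem mulVec_le_one_sub_mul (hQ : ∀ x y, 0 ≤ Q x y) (hrow : ∀ x, ∑ y, Q x y ≤ 1) {f : V → ℝ}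
    (hf : ∀ y, f y ≤ 1) (x y : V) : (Q *ᵥ f) x ≤ 1 - Q x y * (1 - f y) := by
  have hdefect : Q x y * (1 - f y) ≤ ∑ z, Q x z * (1 - f z) :=
    single_le_sum (f := fun z => Q x z * (1 - f z))
      (fun z _ => mul_nonneg (hQ x z) (sub_nonneg.2 (hf z))) (mem_univ y)
  have : (Q *ᵥ f) x = ∑ z, Q x z - ∑ z, Q x z * (1 - f z) := by
    simp only [mulVec, dotProduct, mul_sub, mul_one, sum_sub_distrib, sub_sub_cancel]
  linarith [hrow x]

end NonnegMulVec

section Substochastic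

/- For a sub-stochastic `Q`, `(Q ^ t *ᵥ fun _ => 1) x` is the probability that the walk started at
`x` and killed at rate `1 - ∑ y, Q x y` survives `t` steps. -/

variable {Q : Matrix V V ℝ}

theorem pow_succ_mulVec (t : ℕ) (f : V → ℝ) : Q ^ (t + 1) *ᵥ f = Q *ᵥ (Q ^ t *ᵥ f) := by
  rw [pow_succ', ← mulVec_mulVec]

theorem pow_mulVec_one_nonneg (hQ : ∀ x y, 0 ≤ Q x y) (t : ℕ) (x : V) :
    0 ≤ (Q ^ t *ᵥ fun _ => (1 : ℝ)) x :=
  sum_nonneg fun y _ => mul_nonneg (pow_apply_nonneg hQ t x y) zero_le_one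

theorem pow_mulVec_one_le_one (hQ : ∀ x y, 0 ≤ Q x y) (hrow : ∀ x, ∑ y, Q x y ≤ 1) (t : ℕ)
    (x : V) : (Q ^ t *ᵥ fun _ => (1 : ℝ)) x ≤ 1 := by
  induction t generalizing x with
  | zero => simp
  | succ t ih => rw [pow_succ_mulVec]; exact (mulVec_le_sum_of_le_one hQ ih x).trans (hrow x)

theorem pow_succ_mulVec_one_le_of_descent (hQ : ∀ x y, 0 ≤ Q x y) (hrow : ∀ x, ∑ y, Q x y ≤ 1)
    {p : ℝ} (hp0 : 0 ≤ p) (hp1 : p ≤ 1) (d : V → ℕ)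
    (hdesc : ∀ x, ∑ y, Q x y ≤ 1 - p ∨ ∃ y, d y < d x ∧ p ≤ Q x y) (n : ℕ) (x : V)
    (hx : d x ≤ n) : (Q ^ (n + 1) *ᵥ fun _ => (1 : ℝ)) x ≤ 1 - p ^ (n + 1) := by
  have of_dies : ∀ n x, ∑ y, Q x y ≤ 1 - p →
      (Q ^ (n + 1) *ᵥ fun _ => (1 : ℝ)) x ≤ 1 - p ^ (n + 1) := by
    intro n x hdie
    rw [pow_succ_mulVec]
    have : p ^ (n + 1) ≤ p := pow_le_of_le_one hp0 hp1 (by omega)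
    linarith [mulVec_le_sum_of_le_one hQ (pow_mulVec_one_le_one hQ hrow n) x]
  induction n generalizing x with
  | zero =>
    rcases hdesc x with hdie | ⟨y, hy, -⟩
    · exact of_dies 0 x hdie
    · omega
  | succ n ih =>
    rcases hdesc x with hdie | ⟨y, hy, hpy⟩
    · exact of_dies (n + 1) x hdie
    · have hsurv := ih y (by omega)
      have : p * p ^ (n + 1) ≤ Q x y * (1 - (Q ^ (n + 1) *ᵥ fun _ => (1 : ℝ)) y) :=
        mul_le_mul hpy (by linarith) (pow_nonneg hp0 _) (hp0.trans hpy)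
      rw [pow_succ_mulVec, pow_succ' p (n + 1)]
      linarith [mulVec_le_one_sub_mul hQ hrow (pow_mulVec_one_le_one hQ hrow (n + 1)) x y]

theorem summable_pow_mulVec_one (hQ : ∀ x y, 0 ≤ Q x y) (hrow : ∀ x, ∑ y, Q x y ≤ 1) {T : ℕ}
    (hT : T ≠ 0) {ρ : ℝ} (hρ : ρ < 1) (hbound : ∀ x, (Q ^ T *ᵥ fun _ => (1 : ℝ)) x ≤ ρ)
    (x : V) : Summable fun t => (Q ^ t *ᵥ fun _ => (1 : ℝ)) x := by
  have hρ0 : 0 ≤ ρ := (pow_mulVec_one_nonneg hQ T x).trans (hbound x)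
  have hgeom : ∀ k y, (Q ^ (T * k) *ᵥ fun _ => (1 : ℝ)) y ≤ ρ ^ k := by
    intro k
    induction k with
    | zero => simp
    | succ k ih =>
      intro y
      rw [mul_add_one, pow_add, ← mulVec_mulVec, pow_succ]
      calc (Q ^ (T * k) *ᵥ (Q ^ T *ᵥ fun _ => (1 : ℝ))) y
          ≤ (Q ^ (T * k) *ᵥ fun _ => ρ) y :=
            mulVec_le_mulVec_of_nonneg (pow_apply_nonneg hQ _) hbound y
        _ = ρ * (Q ^ (T * k) *ᵥ fun _ => (1 : ℝ)) y := by
            simp [mulVec, dotProduct, mul_sum, mul_comm]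
        _ ≤ ρ ^ k * ρ := by rw [mul_comm]; exact mul_le_mul_of_nonneg_right (ih y) hρ0
  have hanti : Antitone fun t => (Q ^ t *ᵥ fun _ => (1 : ℝ)) x := by
    refine antitone_nat_of_succ_le fun t => ?_
    rw [pow_succ, ← mulVec_mulVec]
    exact mulVec_le_mulVec_of_nonneg (pow_apply_nonneg hQ t)
      (fun y => (mulVec_le_sum_of_le_one hQ (fun _ => le_rfl) y).trans (hrow y)) x
  have : NeZero T := ⟨hT⟩
  rw [← summable_indicator_mod_iff hanti (0 : ZMod T), ← Nat.cast_zero,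
    summable_indicator_mod_iff_summable]
  exact (summable_geometric_of_lt_one hρ0 hρ).of_nonneg_of_le
    (fun k => pow_mulVec_one_nonneg hQ _ x) (fun k => hgeom k x)

theorem tsum_pow_mulVec_one_eq
    (hsum : ∀ y, Summable fun t => (Q ^ t *ᵥ fun _ => (1 : ℝ)) y) (x : V) :
    ∑' t, (Q ^ t *ᵥ fun _ => (1 : ℝ)) x
      = 1 + ∑ y, Q x y * ∑' t, (Q ^ t *ᵥ fun _ => (1 : ℝ)) y := by
  rw [(hsum x).tsum_eq_zero_add, pow_zero, one_mulVec]
  congr 1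
  simp_rw [pow_succ_mulVec, mulVec, dotProduct]
  rw [Summable.tsum_finsetSum fun y _ => (hsum y).mul_left _]
  simp_rw [tsum_mul_left]
  rfl

end Substochastic

section Killing

variable {V : Type*} [DecidableEq V] {P : Matrix V V ℝ}

theorem killAt_nonneg (hP : ∀ x y, 0 ≤ P x y) (v x y : V) : 0 ≤ killAt P v x y := by
  simp only [killAt, of_apply]; split_ifs <;> simp [hP x y]

end Killing

section HittingTime

variable {P : Matrix V V ℝ}

theorem sum_killAt (v x : V) : ∑ y, killAt P v x y = ∑ y, P x y - P x v := by
  have hsplit : ∀ y, killAt P v x y = P x y - if y = v then P x y else 0 := fun y => by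
    by_cases hy : y = v <;> simp [killAt, hy]
  simp only [hsplit, sum_sub_distrib, sum_ite_eq', mem_univ, if_true]

theorem hitTime_nonneg (hP : ∀ x y, 0 ≤ P x y) (u v : V) : 0 ≤ hitTime P u v := by
  unfold hitTime
  split_ifs
  exacts [le_rfl, tsum_nonneg fun t => pow_mulVec_one_nonneg (killAt_nonneg hP v) t u]

theorem hitTime_eq_one_add_sum {v : V}
    (hsum : ∀ y, Summable fun t => (killAt P v ^ t *ᵥ fun _ => (1 : ℝ)) y) {x : V} (hx : x ≠ v) :
    hitTime P x v = 1 + ∑ y, P x y * hitTime P y v := by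
  rw [hitTime, if_neg hx, tsum_pow_mulVec_one_eq hsum]
  congr 1
  refine sum_congr rfl fun y _ => ?_
  by_cases hy : y = v <;> simp [killAt, hitTime, hy]

end HittingTime

section DirichletForm

variable {V : Type*} [Fintype V] {w : Matrix V V ℝ}

def dirichletForm (w : Matrix V V ℝ) (f g : V → ℝ) : ℝ :=
  ∑ x, ∑ y, w x y * (f x - f y) * (g x - g y)

theorem dirichletForm_eq_two_mul_sum (hsym : w.IsSymm) (f g : V → ℝ) :
    dirichletForm w f g = 2 * ∑ x, g x * ∑ y, w x y * (f x - f y) := by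
  have hswap : ∑ x, ∑ y, w x y * (f x - f y) * g y = -∑ x, ∑ y, w x y * (f x - f y) * g x := by
    rw [sum_comm, ← sum_neg_distrib]
    refine sum_congr rfl fun x _ => ?_
    rw [← sum_neg_distrib]
    refine sum_congr rfl fun y _ => ?_
    rw [hsym.apply x y]
    ring
  calc dirichletForm w f g
      = ∑ x, ∑ y, w x y * (f x - f y) * g x - ∑ x, ∑ y, w x y * (f x - f y) * g y := by
        simp only [dirichletForm, mul_sub, sum_sub_distrib]
    _ = 2 * ∑ x, g x * ∑ y, w x y * (f x - f y) := by
        rw [hswap, sub_neg_eq_add, ← two_mul]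
        simp only [mul_sum, sum_mul, mul_comm (g _)]

theorem dirichletForm_self_nonneg (hw : ∀ x y, 0 ≤ w x y) (f : V → ℝ) :
    0 ≤ dirichletForm w f f :=
  sum_nonneg fun x _ => sum_nonneg fun y _ => by
    rw [mul_assoc]; exact mul_nonneg (hw x y) (mul_self_nonneg _)

theorem dirichletForm_sq_le (hw : ∀ x y, 0 ≤ w x y) (f g : V → ℝ) :
    dirichletForm w f g ^ 2 ≤ dirichletForm w f f * dirichletForm w g g := by
  simp only [dirichletForm, ← sum_product', univ_product_univ]
  refine sum_sq_le_sum_mul_sum_of_sq_le_mul _ (fun i _ => ?_) (fun i _ => ?_) (fun i _ => ?_)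
  · nlinarith [hw i.1 i.2, mul_self_nonneg (f i.1 - f i.2)]
  · nlinarith [hw i.1 i.2, mul_self_nonneg (g i.1 - g i.2)]
  · exact le_of_eq (by ring)

theorem transition_nonneg (hw : ∀ x y, 0 ≤ w x y) (x y : V) : 0 ≤ transition w x y :=
  div_nonneg (hw x y) (sum_nonneg fun z _ => hw x z)

theorem sum_mul_transition (hw : ∀ x y, 0 ≤ w x y) (x y : V) :
    (∑ z, w x z) * transition w x y = w x y := by
  by_cases hdeg : ∑ z, w x z = 0
  · rw [(sum_eq_zero_iff_of_nonneg fun z _ => hw x z).1 hdeg y (mem_univ y), hdeg, zero_mul]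
  · exact mul_div_cancel₀ _ hdeg

theorem sum_transition_eq_one {x : V} (hx : ∑ y, w x y ≠ 0) : ∑ y, transition w x y = 1 := by
  simp only [transition, of_apply, ← sum_div, div_self hx]

end DirichletForm

section CommuteTime

variable {w : Matrix V V ℝ}

theorem sum_mul_laplacian_hitTime (hsym : w.IsSymm) (hw : ∀ x y, 0 ≤ w x y) {v : V}
    (hsum : ∀ x, Summable fun t => (killAt (transition w) v ^ t *ᵥ fun _ => (1 : ℝ)) x)
    (g : V → ℝ) :
    ∑ x, g x * ∑ y, w x y * (hitTime (transition w) x v - hitTime (transition w) y v)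
      = ∑ x, g x * ∑ y, w x y - (∑ x, ∑ y, w x y) * g v := by
  set h := fun x => hitTime (transition w) x v
  set defect := fun x => ∑ y, w x y * (h x - h y) - ∑ y, w x y
  have off_v : ∀ x, x ≠ v → defect x = 0 := by
    intro x hx
    have hdeg : (∑ y, w x y) * ∑ y, transition w x y * h y = ∑ y, w x y * h y := by
      simp only [mul_sum, ← mul_assoc, sum_mul_transition hw]
    simp only [defect, mul_sub, sum_sub_distrib, ← sum_mul, h,
      hitTime_eq_one_add_sum hsum hx]
    rw [mul_add, mul_one, hdeg]
    ring
  have hdefect : ∑ x, defect x = -∑ x, ∑ y, w x y := by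
    have hzero : dirichletForm w h 1 = 0 := by simp [dirichletForm]
    rw [dirichletForm_eq_two_mul_sum hsym] at hzero
    simp only [defect, sum_sub_distrib]
    simpa using hzero
  -- the Laplacian of `h` sums to zero, which pins down its value at `v`
  have hv : defect v = -∑ x, ∑ y, w x y := by
    rwa [sum_eq_single v (fun x _ hx => off_v x hx) (by simp)] at hdefect
  have hpoint : ∀ x, ∑ y, w x y * (h x - h y)
      = ∑ y, w x y - if x = v then ∑ a, ∑ b, w a b else 0 := by
    intro x
    by_cases hx : x = v
    · subst hx; simp only [if_true]; linarith [hv]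
    · simp only [if_neg hx]; linarith [off_v x hx]
  simp only [h] at hpoint
  simp only [hpoint, mul_sub (g _), sum_sub_distrib, mul_ite, mul_zero, sum_ite_eq', mem_univ,
    if_true, mul_comm (g v)]

theorem commuteTime_nonneg (hw : ∀ x y, 0 ≤ w x y) (u v : V) : 0 ≤ commuteTime w u v :=
  add_nonneg (hitTime_nonneg (transition_nonneg hw) u v)
    (hitTime_nonneg (transition_nonneg hw) v u)

theorem two_mul_sum_mul_sq_le_dirichletForm_mul_commuteTime (hsym : w.IsSymm)
    (hw : ∀ x y, 0 ≤ w x y)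
    (hsum : ∀ v x, Summable fun t => (killAt (transition w) v ^ t *ᵥ fun _ => (1 : ℝ)) x)
    (u v : V) (φ : V → ℝ) :
    2 * (∑ x, ∑ y, w x y) * (φ u - φ v) ^ 2 ≤ dirichletForm w φ φ * commuteTime w u v := by
  set vol := ∑ x, ∑ y, w x y
  set β := fun x => hitTime (transition w) x v - hitTime (transition w) x u
  have hβ : ∀ g, dirichletForm w β g = 2 * vol * (g u - g v) := by
    intro g
    have hv := sum_mul_laplacian_hitTime hsym hw (hsum v) g
    have hu := sum_mul_laplacian_hitTime hsym hw (hsum u) g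
    have hsplit : ∀ x y, w x y * (β x - β y)
        = w x y * (hitTime (transition w) x v - hitTime (transition w) y v)
          - w x y * (hitTime (transition w) x u - hitTime (transition w) y u) :=
      fun x y => by simp only [β]; ring
    rw [dirichletForm_eq_two_mul_sum hsym]
    simp only [hsplit, sum_sub_distrib, mul_sub (g _), hv, hu]
    ring
  have hκ : β u - β v = commuteTime w u v := by
    simp [β, commuteTime, hitTime]
  have hcs := dirichletForm_sq_le hw β φ
  rw [hβ, hβ, hκ] at hcs
  have hvol : 0 ≤ vol := sum_nonneg fun x _ => sum_nonneg fun y _ => hw x y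
  have hκ0 := commuteTime_nonneg hw u v
  have hE := dirichletForm_self_nonneg hw φ
  rcases hvol.eq_or_lt with hzero | hpos
  · rw [← hzero]; simpa using mul_nonneg hE hκ0
  · refine le_of_mul_le_mul_left ?_ (by positivity : 0 < 2 * vol)
    linarith

end CommuteTime

section Band

theorem sum_range_natAbs_sub_eq {N s : ℕ} (hs : 0 < s) (F : ℕ → ℕ → ℝ) :
    ∑ a ∈ range N, ∑ b ∈ range N, (if ((a : ℤ) - b).natAbs = s then F a b else 0)
      = ∑ a ∈ range (N - s), (F (a + s) a + F a (a + s)) := by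
  have hsplit : ∀ a b : ℕ, (if ((a : ℤ) - b).natAbs = s then F a b else 0)
      = (if a = b + s then F a b else 0) + (if b = a + s then F a b else 0) := by
    intro a b; split_ifs <;> first | omega | simp
  have hrange : (range N).filter (fun a => a + s ∈ range N) = range (N - s) := by
    ext a; simp only [mem_filter, mem_range]; omega
  simp only [hsplit, sum_add_distrib]
  rw [sum_comm (f := fun a b => if a = b + s then F a b else 0)]
  simp only [sum_ite_eq', ← sum_filter, hrange]

theorem sum_range_band (N L : ℕ) (F : ℕ → ℕ → ℝ) :
    ∑ a ∈ range N, ∑ b ∈ range N, (if ((a : ℤ) - b).natAbs ≤ L then F a b else 0)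
      = ∑ a ∈ range N, F a a
        + ∑ t ∈ range L, ∑ a ∈ range (N - (t + 1)), (F (a + (t + 1)) a + F a (a + (t + 1))) := by
  induction L with
  | zero =>
    have hdiag : ∀ a b : ℕ, ((a : ℤ) - b).natAbs ≤ 0 ↔ a = b := fun a b => by omega
    simp +contextual [hdiag]
  | succ L ih =>
    have hsplit : ∀ a b : ℕ, (if ((a : ℤ) - b).natAbs ≤ L + 1 then F a b else 0)
        = (if ((a : ℤ) - b).natAbs ≤ L then F a b else 0)
          + (if ((a : ℤ) - b).natAbs = L + 1 then F a b else 0) := by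
      intro a b; split_ifs <;> first | omega | simp
    simp only [hsplit, sum_add_distrib, ih, sum_range_natAbs_sub_eq (Nat.succ_pos L),
      sum_range_succ]
    ring

theorem sum_range_succ_mul_two (L : ℕ) : ∑ t ∈ range L, ((t : ℝ) + 1) * 2 = L * (L + 1) := by
  induction L with
  | zero => simp
  | succ L ih => rw [sum_range_succ, ih]; push_cast; ring

theorem sum_range_shift_sub_le {f : ℕ → ℝ} {K : ℝ} (h0 : ∀ x, 0 ≤ f x) (hK : ∀ x, f x ≤ K)
    (M s : ℕ) : ∑ a ∈ range M, (f (a + s) - f a) ≤ s * K := by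
  have hshift := sum_range_add f s M
  rw [add_comm s M, sum_range_add] at hshift
  have htop : ∑ x ∈ range s, f (M + x) ≤ s * K := by
    simpa using sum_le_sum fun x (_ : x ∈ range s) => hK (M + x)
  have hbot : 0 ≤ ∑ x ∈ range s, f x := sum_nonneg fun x _ => h0 x
  simp only [sum_sub_distrib, add_comm _ s]
  linarith

theorem sum_range_band_sq_sub_le {L : ℕ} (N : ℕ) {φ : ℕ → ℝ} {K : ℝ} (h0 : ∀ x, 0 ≤ φ x)
    (hK : ∀ x, φ x ≤ K) (hmono : Monotone φ) (hstep : ∀ x t, t ≤ L → φ (x + t) ≤ φ x + 1) :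
    ∑ a ∈ range N, ∑ b ∈ range N, (if ((a : ℤ) - b).natAbs ≤ L then (φ a - φ b) ^ 2 else 0)
      ≤ K * (L * (L + 1)) := by
  rw [sum_range_band]
  simp only [sub_self, ne_eq, OfNat.ofNat_ne_zero, not_false_eq_true, zero_pow, sum_const_zero,
    zero_add]
  calc ∑ t ∈ range L, ∑ a ∈ range (N - (t + 1)),
        ((φ (a + (t + 1)) - φ a) ^ 2 + (φ a - φ (a + (t + 1))) ^ 2)
      ≤ ∑ t ∈ range L, 2 * ∑ a ∈ range (N - (t + 1)), (φ (a + (t + 1)) - φ a) := by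
        refine sum_le_sum fun t ht => ?_
        rw [mul_sum]
        refine sum_le_sum fun a _ => ?_
        have hlo := hmono (Nat.le_add_right a (t + 1))
        have hhi := hstep a (t + 1) (by simp at ht; omega)
        nlinarith
    _ ≤ ∑ t ∈ range L, 2 * ((t + 1 : ℕ) * K) := by
        gcongr with t
        exact sum_range_shift_sub_le h0 hK _ _
    _ = K * (L * (L + 1)) := by
        rw [← sum_range_succ_mul_two, mul_sum]
        refine sum_congr rfl fun t _ => ?_
        push_cast; ring

def ramp (a g x : ℝ) : ℝ := max 0 (min (x - a) g)

theorem sum_range_band_sq_ramp_le (N : ℕ) {L : ℕ} (hL : 0 < L) (a : ℝ) {g : ℝ} (hg : 0 ≤ g) :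
    ∑ x ∈ range N, ∑ y ∈ range N, (if ((x : ℤ) - y).natAbs ≤ L
        then (ramp a g x / L - ramp a g y / L) ^ 2 else 0) ≤ g / L * (L * (L + 1)) := by
  have hL' : (0 : ℝ) < L := by exact_mod_cast hL
  refine sum_range_band_sq_sub_le N (fun x => ?_) (fun x => ?_) (fun x y hxy => ?_)
    (fun x t ht => ?_)
  · exact div_nonneg (le_max_left _ _) hL'.le
  · exact div_le_div_of_nonneg_right (max_le hg (min_le_right _ _)) hL'.le
  · have : (x : ℝ) ≤ y := by exact_mod_cast hxy
    unfold ramp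
    gcongr
  · have hstep : ramp a g (x + t : ℕ) ≤ ramp a g x + L := by
      have : (t : ℝ) ≤ L := by exact_mod_cast ht
      unfold ramp
      push_cast
      grind
    rw [div_add_one hL'.ne']
    exact div_le_div_of_nonneg_right hstep hL'.le

end Band

section SlowGraph

variable {N L : ℕ} {wS : ℝ}

theorem slowWeight_isSymm : (slowWeight N L wS).IsSymm := by
  ext x y
  simp only [slowWeight, transpose_apply, of_apply]
  rw [show ((y : ℤ) - x).natAbs = ((x : ℤ) - y).natAbs by omega]

theorem slowWeight_nonneg (hw : 0 ≤ wS) (x y : Fin N) : 0 ≤ slowWeight N L wS x y := by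
  simp only [slowWeight, of_apply]; split_ifs <;> simp [hw]

theorem sum_sum_slowWeight_mul (F : ℕ → ℕ → ℝ) :
    ∑ x : Fin N, ∑ y : Fin N, slowWeight N L wS x y * F x y
      = wS * ∑ a ∈ range N, ∑ b ∈ range N, (if ((a : ℤ) - b).natAbs ≤ L then F a b else 0) := by
  simp only [slowWeight, of_apply, ite_mul, zero_mul, mul_sum, mul_ite, mul_zero]
  rw [← Fin.sum_univ_eq_sum_range]
  exact sum_congr rfl fun x _ => Fin.sum_univ_eq_sum_range (fun b =>
    if (((x : ℕ) : ℤ) - b).natAbs ≤ L then wS * F x b else 0) N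

theorem sum_sum_slowWeight (hLN : L ≤ N) :
    ∑ x : Fin N, ∑ y, slowWeight N L wS x y = (N * (2 * L + 1) - L * (L + 1)) * wS := by
  have hcount : ∀ k ≤ N, ∑ t ∈ range k, ((N - (t + 1) : ℕ) : ℝ) * 2 = 2 * N * k - k * (k + 1) := by
    intro k hk
    induction k with
    | zero => simp
    | succ k ih => rw [sum_range_succ, ih (by omega), Nat.cast_sub (by omega)]; push_cast; ring
  calc ∑ x : Fin N, ∑ y, slowWeight N L wS x y
      = ∑ x : Fin N, ∑ y, slowWeight N L wS x y * 1 := by simp only [mul_one]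
    _ = wS * ∑ a ∈ range N, ∑ b ∈ range N, (if ((a : ℤ) - b).natAbs ≤ L then 1 else 0) :=
        sum_sum_slowWeight_mul fun _ _ => 1
    _ = wS * (N + ∑ t ∈ range L, ((N - (t + 1) : ℕ) : ℝ) * 2) := by
        rw [sum_range_band]
        simp [one_add_one_eq_two]
    _ = (N * (2 * L + 1) - L * (L + 1)) * wS := by rw [hcount L hLN]; ring

theorem dirichletForm_slowWeight (f : ℕ → ℝ) :
    dirichletForm (slowWeight N L wS) (fun x => f x) (fun x => f x)
      = wS * ∑ a ∈ range N, ∑ b ∈ range N,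
          (if ((a : ℤ) - b).natAbs ≤ L then (f a - f b) ^ 2 else 0) := by
  rw [← sum_sum_slowWeight_mul]
  simp only [dirichletForm, mul_assoc, sq]

theorem sum_slowWeight_pos (hw : 0 < wS) (x : Fin N) : 0 < ∑ y, slowWeight N L wS x y := by
  refine hw.trans_le (le_of_eq_of_le ?_ (single_le_sum (fun y _ => slowWeight_nonneg hw.le x y)
    (mem_univ x)))
  simp [slowWeight]

theorem inv_le_transition_slowWeight (hw : 0 < wS) {x y : Fin N}
    (hxy : ((x : ℤ) - y).natAbs ≤ L) : (N : ℝ)⁻¹ ≤ transition (slowWeight N L wS) x y := by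
  have hdeg : ∑ z, slowWeight N L wS x z ≤ N * wS := by
    simpa using sum_le_sum fun z (_ : z ∈ univ) =>
      show slowWeight N L wS x z ≤ wS by simp only [slowWeight, of_apply]; split_ifs <;> linarith
  have hN : (0 : ℝ) < N := by exact_mod_cast Fin.pos x
  have hpos := sum_slowWeight_pos (L := L) hw x
  simp only [transition, of_apply]
  rw [show slowWeight N L wS x y = wS by simp [slowWeight, hxy], inv_eq_one_div,
    div_le_div_iff₀ hN hpos]
  linarith

theorem summable_killAt_slowWeight (hL : 1 ≤ L) (hw : 0 < wS) (v x : Fin N) :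
    Summable fun t => (killAt (transition (slowWeight N L wS)) v ^ t *ᵥ fun _ => (1 : ℝ)) x := by
  set P := transition (slowWeight N L wS)
  have hP : ∀ x y, 0 ≤ P x y := transition_nonneg (slowWeight_nonneg hw.le)
  have hQ := killAt_nonneg hP v
  have hQrow : ∀ y, ∑ z, killAt P v y z = 1 - P y v := fun y => by
    rw [sum_killAt, sum_transition_eq_one (sum_slowWeight_pos hw y).ne']
  have hQrow_le : ∀ y, ∑ z, killAt P v y z ≤ 1 := fun y => by linarith [hQrow y, hP y v]
  have hN : 0 < N := Fin.pos v
  set p : ℝ := (N : ℝ)⁻¹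
  have hp0 : 0 < p := by positivity
  have hp1 : p ≤ 1 := inv_le_one_of_one_le₀ (by exact_mod_cast hN)
  -- the walk is killed near `v`, and elsewhere it can step one site towards `v`
  have hdesc : ∀ y, ∑ z, killAt P v y z ≤ 1 - p ∨
      ∃ z : Fin N, ((z : ℤ) - v).natAbs < ((y : ℤ) - v).natAbs ∧ p ≤ killAt P v y z := by
    intro y
    by_cases hyv : ((y : ℤ) - v).natAbs ≤ L
    · left; linarith [hQrow y, inv_le_transition_slowWeight hw hyv]
    · right
      obtain ⟨z, hyz, hzv⟩ : ∃ z : Fin N, ((y : ℤ) - z).natAbs = 1 ∧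
          ((z : ℤ) - v).natAbs < ((y : ℤ) - v).natAbs := by
        rcases lt_or_ge (y : ℕ) v with hlt | hge
        · exact ⟨⟨y + 1, by omega⟩, by simp, by simp; omega⟩
        · exact ⟨⟨y - 1, by omega⟩, by simp; omega, by simp; omega⟩
      have hzv' : z ≠ v := by rintro rfl; omega
      refine ⟨z, hzv, ?_⟩
      simp only [killAt, of_apply, if_neg hzv']
      exact inv_le_transition_slowWeight hw (by omega)
  refine summable_pow_mulVec_one hQ hQrow_le hN.ne' (ρ := 1 - p ^ N)
    (by linarith [pow_pos hp0 N]) (fun y => ?_) x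
  have := pow_succ_mulVec_one_le_of_descent hQ hQrow_le hp0.le hp1
    (fun z : Fin N => ((z : ℤ) - v).natAbs) hdesc (N - 1) y (by omega)
  rwa [Nat.sub_add_cancel hN] at this

end SlowGraph

/-- In the slow graph `S(N,L)` with edge weight `w_S > 0`, the commute time between
vertices `x_{m_0}` and `x_{n_0}` with `m_0 < n_0` satisfies
`κ(x_{m_0},x_{n_0}) ≥ (2[N(2L+1) − L(L+1)]/(L(L+1))) · (n_0 − m_0)/L`. -/
theorem slow_graph_commute_time_lower_bound (N L : ℕ) (hL : 1 ≤ L)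
    (hNL : 2 * L + 1 ≤ N) (wS : ℝ) (hw : 0 < wS) (m₀ n₀ : Fin N) (h : m₀ < n₀) :
    2 * ((N : ℝ) * (2 * (L : ℝ) + 1) - (L : ℝ) * ((L : ℝ) + 1)) / ((L : ℝ) * ((L : ℝ) + 1))
        * (((n₀ : ℕ) : ℝ) - ((m₀ : ℕ) : ℝ)) / (L : ℝ)
      ≤ commuteTime (slowWeight N L wS) m₀ n₀ := by
  set g := ((n₀ : ℕ) : ℝ) - ((m₀ : ℕ) : ℝ)
  have hg : 0 < g := sub_pos.2 (by exact_mod_cast h)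
  have hbound := two_mul_sum_mul_sq_le_dirichletForm_mul_commuteTime slowWeight_isSymm
    (slowWeight_nonneg hw.le) (summable_killAt_slowWeight hL hw) m₀ n₀
    (fun x => ramp (m₀ : ℕ) g (x : ℕ) / L)
  rw [sum_sum_slowWeight (by omega), dirichletForm_slowWeight fun n => ramp (m₀ : ℕ) g n / L]
    at hbound
  have henergy := sum_range_band_sq_ramp_le N hL (m₀ : ℕ) hg.le
  have hκ := commuteTime_nonneg (slowWeight_nonneg (L := L) hw.le) m₀ n₀
  have hends : ramp (m₀ : ℕ) g (m₀ : ℕ) / L - ramp (m₀ : ℕ) g (n₀ : ℕ) / L = -(g / L) := by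
    simp [ramp, g, hg.le]
  rw [hends] at hbound
  set A := (N : ℝ) * (2 * L + 1) - L * (L + 1)
  have hcut : 2 * A * (g / L) * (wS * (g / L))
      ≤ commuteTime (slowWeight N L wS) m₀ n₀ * (L * (L + 1)) * (wS * (g / L)) := by
    nlinarith [mul_le_mul_of_nonneg_left henergy (mul_nonneg hw.le hκ)]
  calc 2 * A / (L * (L + 1)) * g / L = 2 * A * (g / L) / (L * (L + 1)) := by ring
    _ ≤ commuteTime (slowWeight N L wS) m₀ n₀ := by
      rw [div_le_iff₀ (by positivity)]
      exact le_of_mul_le_mul_right hcut (by positivity)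
end

section
/- The eigenvalues of the normalized adjacency matrix D^{−1/2} W D^{−1/2} of the path graph on N vertices (unit edge weights, no self-loops) are cos(π(k−1)/(N−1)) for k = 1, 2, ..., N. -/
open Matrix Polynomial BigOperators

/-- The adjacency matrix of the path graph on `N` vertices. -/
noncomputable def pathAdj (N : ℕ) : Matrix (Fin N) (Fin N) ℝ :=
  Matrix.of fun i j => if ((i : ℤ) - (j : ℤ)).natAbs = 1 then (1 : ℝ) else 0

/-- The normalized adjacency matrix `D^{-1/2} W D^{-1/2}` of the path graph. -/
noncomputable def pathNormAdj (N : ℕ) : Matrix (Fin N) (Fin N) ℝ :=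
  Matrix.of fun i j =>
    pathAdj N i j / (Real.sqrt (∑ k, pathAdj N i k) * Real.sqrt (∑ k, pathAdj N j k))

/-! The vectors `u j = cos (θ j)` with `θ = π k / (N - 1)`, `k = 0, …, N - 1`, satisfy
`W u = cos θ • D u`: at an interior vertex this is `cos (x - θ) + cos (x + θ) = 2 cos θ cos x`,
and at the two endpoints, where one neighbour is missing, `sin (θ j)` vanishes (`θ (N - 1) = k π`),
so each remaining neighbour already contributes `cos θ cos (θ j)`. Hence `D^{1/2} u` is an
eigenvector of `D^{-1/2} W D^{-1/2}` with eigenvalue `cos θ`. These `N` eigenvalues are distinct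
since `cos` is injective on `[0, π]`, so they are all the roots of the characteristic polynomial. -/

theorem Matrix.isRoot_charpoly_of_mulVec_eq_smul {n K : Type*} [Fintype n] [DecidableEq n]
    [Field K] (A : Matrix n n K) {μ : K} {v : n → K} (hv : v ≠ 0) (hAv : A *ᵥ v = μ • v) :
    A.charpoly.IsRoot μ := by
  rw [← Matrix.charpoly_toLin', ← Module.End.hasEigenvalue_iff_isRoot_charpoly]
  exact Module.End.hasEigenvalue_of_hasEigenvector
    (Module.End.hasEigenvector_iff.mpr ⟨by simpa [Matrix.toLin'_apply] using hAv, hv⟩)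

theorem Matrix.charpoly_eq_prod_X_sub_C_of_injOn {n ι K : Type*} [Fintype n] [DecidableEq n]
    [Field K] (A : Matrix n n K) (s : Finset ι) (μ : ι → K) (hcard : s.card = Fintype.card n)
    (hμ : Set.InjOn μ s) (hroot : ∀ k ∈ s, A.charpoly.IsRoot (μ k)) :
    A.charpoly = ∏ k ∈ s, (X - C (μ k)) := by
  have hprod : ∏ k ∈ s, (X - C (μ k)) = ((s.val.map μ).map fun a => X - C a).prod := by
    rw [Multiset.map_map]; rfl
  have hle : s.val.map μ ≤ A.charpoly.roots := by
    refine (Multiset.le_iff_subset (s.nodup.map_on fun a ha b hb h => hμ ha hb h)).mpr ?_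
    intro a ha
    obtain ⟨k, hk, rfl⟩ := Multiset.mem_map.mp ha
    exact (mem_roots A.charpoly_monic.ne_zero).mpr (hroot k hk)
  rw [hprod]
  refine eq_of_monic_of_dvd_of_natDegree_le
    (monic_multiset_prod_of_monic _ _ fun _ _ => monic_X_sub_C _) A.charpoly_monic
    ((Multiset.prod_X_sub_C_dvd_iff_le_roots A.charpoly_monic.ne_zero _).mpr hle) ?_
  rw [natDegree_multiset_prod_X_sub_C_eq_card, Multiset.card_map, charpoly_natDegree_eq_dim]
  exact hcard.ge

noncomputable def normalizedAdj {ι : Type*} [Fintype ι] (W : Matrix ι ι ℝ) : Matrix ι ι ℝ :=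
  Matrix.of fun i j => W i j / (√(∑ k, W i k) * √(∑ k, W j k))

theorem normalizedAdj_exists_mulVec_eq_smul {ι : Type*} [Fintype ι] (W : Matrix ι ι ℝ)
    (hdeg : ∀ i, 0 < ∑ k, W i k) {μ : ℝ} {u : ι → ℝ} (hu : u ≠ 0)
    (hWu : W *ᵥ u = μ • fun i => (∑ k, W i k) * u i) :
    ∃ v, v ≠ 0 ∧ normalizedAdj W *ᵥ v = μ • v := by
  have hsqrt : ∀ i, √(∑ k, W i k) ≠ 0 := fun i => (Real.sqrt_pos.mpr (hdeg i)).ne'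
  refine ⟨fun i => √(∑ k, W i k) * u i, fun h => hu (funext fun i => ?_), funext fun i => ?_⟩
  · simpa [hsqrt i] using congrFun h i
  · have hWu_i := congrFun hWu i
    simp only [mulVec, dotProduct, Pi.smul_apply, smul_eq_mul] at hWu_i ⊢
    calc ∑ j, normalizedAdj W i j * (√(∑ k, W j k) * u j)
        = (∑ j, W i j * u j) / √(∑ k, W i k) := by
          rw [Finset.sum_div]
          refine Finset.sum_congr rfl fun j _ => ?_
          simp only [normalizedAdj, of_apply]
          field_simp [hsqrt i, hsqrt j]
      _ = μ * (√(∑ k, W i k) * u i) := by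
          rw [hWu_i, div_eq_iff (hsqrt i)]
          linear_combination μ * u i * (Real.mul_self_sqrt (hdeg i).le).symm

theorem pathNormAdj_eq_normalizedAdj (N : ℕ) : pathNormAdj N = normalizedAdj (pathAdj N) := rfl

theorem pathAdj_mulVec_apply (N : ℕ) (f : ℕ → ℝ) (i : Fin N) :
    (pathAdj N *ᵥ fun j => f j) i
      = (if (i : ℕ) = 0 then 0 else f (i - 1)) + (if (i : ℕ) + 1 < N then f (i + 1) else 0) := by
  simp only [mulVec, dotProduct, pathAdj, of_apply, ite_mul, one_mul, zero_mul]
  rw [Fin.sum_univ_eq_sum_range (fun j => if ((i : ℤ) - (j : ℤ)).natAbs = 1 then f j else 0)]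
  have hsplit : ∀ j : ℕ, (if ((i : ℤ) - (j : ℤ)).natAbs = 1 then f j else 0)
      = (if (i : ℕ) = 0 then 0 else if j = i - 1 then f j else 0)
        + (if j = i + 1 then f j else 0) := fun j => by
    split_ifs <;> first | omega | simp
  have hi := i.isLt
  rw [Finset.sum_congr rfl fun j _ => hsplit j, Finset.sum_add_distrib]
  by_cases h0 : (i : ℕ) = 0 <;> simp [h0, Finset.sum_ite_eq', Nat.sub_lt_of_lt hi]

theorem pathAdj_row_sum (N : ℕ) (i : Fin N) :
    ∑ k, pathAdj N i k
      = (if (i : ℕ) = 0 then 0 else 1) + (if (i : ℕ) + 1 < N then 1 else 0) := by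
  simpa [mulVec, dotProduct] using pathAdj_mulVec_apply N (fun _ => 1) i

theorem pathAdj_mulVec_cos (N : ℕ) {θ : ℝ} (hθ : Real.sin (θ * ((N : ℝ) - 1)) = 0) :
    (pathAdj N *ᵥ fun j => Real.cos (θ * j))
      = Real.cos θ • fun i => (∑ k, pathAdj N i k) * Real.cos (θ * i) := by
  funext i
  rw [pathAdj_mulVec_apply N (fun j => Real.cos (θ * j)) i, Pi.smul_apply, smul_eq_mul,
    pathAdj_row_sum]
  have hprev : (i : ℕ) ≠ 0 → Real.cos (θ * ((i - 1 : ℕ) : ℝ))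
      = Real.cos (θ * i) * Real.cos θ + Real.sin (θ * i) * Real.sin θ := fun h => by
    rw [Nat.cast_sub (Nat.one_le_iff_ne_zero.mpr h), ← Real.cos_sub]; ring_nf
  have hnext : Real.cos (θ * ((i + 1 : ℕ) : ℝ))
      = Real.cos (θ * i) * Real.cos θ - Real.sin (θ * i) * Real.sin θ := by
    rw [← Real.cos_add]; push_cast; ring_nf
  have hsin_last : ¬ (i : ℕ) + 1 < N → Real.sin (θ * i) = 0 := fun h => by
    rwa [show (i : ℝ) = (N : ℝ) - 1 by
      rw [eq_sub_iff_add_eq]; exact_mod_cast (by omega : (i : ℕ) + 1 = N)]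
  rcases eq_or_ne (i : ℕ) 0 with h0 | h0
  · simp [h0]
  by_cases hlt : (i : ℕ) + 1 < N
  · simp only [h0, hlt, hprev h0, hnext, if_false, if_true]; ring
  · simp only [h0, hlt, hprev h0, hsin_last hlt, if_false]; ring

theorem injOn_cos_pi_mul_div {L : ℝ} (hL : 0 < L) :
    Set.InjOn (fun x => Real.cos (Real.pi * x / L)) (Set.Icc 0 L) := by
  intro a ha b hb h
  have hmem : ∀ x ∈ Set.Icc 0 L, Real.pi * x / L ∈ Set.Icc 0 Real.pi := fun x hx =>
    ⟨by have := hx.1; positivity,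
      div_le_of_le_mul₀ hL.le Real.pi_pos.le (by nlinarith [hx.2, Real.pi_pos])⟩
  have := Real.injOn_cos (hmem a ha) (hmem b hb) h
  field_simp at this
  exact this

/-- The eigenvalues (with multiplicity) of the normalized adjacency matrix
`D^{−1/2} W D^{−1/2}` of the path graph on `N` vertices are
`cos(π(k−1)/(N−1))` for `k = 1,…,N`: its characteristic polynomial is
`∏_{k=0}^{N-1} (X − cos(πk/(N−1)))`. -/
theorem path_normalized_adjacency_eigenvalues (N : ℕ) (hN : 2 ≤ N) :
    (pathNormAdj N).charpoly
      = ∏ k ∈ Finset.range N, (X - C (Real.cos (Real.pi * (k : ℝ) / ((N : ℝ) - 1)))) := by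
  have hL : (0 : ℝ) < N - 1 := by
    have : (2 : ℝ) ≤ N := by exact_mod_cast hN
    linarith
  have hdeg : ∀ i : Fin N, 0 < ∑ k, pathAdj N i k := fun i => by
    have := i.isLt
    rw [pathAdj_row_sum]
    split_ifs <;> first | omega | norm_num
  refine (pathNormAdj N).charpoly_eq_prod_X_sub_C_of_injOn _ _ (by simp) (fun a ha b hb hab => ?_)
    fun k _ => ?_
  · have hmem : ∀ c ∈ Finset.range N, (c : ℝ) ∈ Set.Icc 0 ((N : ℝ) - 1) := fun c hc =>
      ⟨c.cast_nonneg, le_sub_iff_add_le.mpr (by exact_mod_cast Finset.mem_range.mp hc)⟩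
    exact_mod_cast injOn_cos_pi_mul_div hL (hmem a ha) (hmem b hb) hab
  · have hsin : Real.sin (Real.pi * k / ((N : ℝ) - 1) * ((N : ℝ) - 1)) = 0 := by
      rw [div_mul_cancel₀ _ hL.ne', mul_comm]
      exact Real.sin_nat_mul_pi k
    have hu : (fun j : Fin N => Real.cos (Real.pi * k / ((N : ℝ) - 1) * j)) ≠ 0 := fun h => by
      simpa using congrFun h ⟨0, by omega⟩
    obtain ⟨v, hv, hAv⟩ :=
      normalizedAdj_exists_mulVec_eq_smul (pathAdj N) hdeg hu (pathAdj_mulVec_cos N hsin)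
    rw [pathNormAdj_eq_normalizedAdj]
    exact isRoot_charpoly_of_mulVec_eq_smul _ hv hAv
end
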